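/- arXiv:2203.00669 — 3 statements merged into one kernel-verified Lean document; each statement's English description precedes it below -/
import Mathlib

section
/- If a PaRL task with plan options is frame preserving, then for every labeled transition ⟨s, o, t⟩ of the option-induced SMDP transition graph, the abstract state of t equals the result of applying the operator o to the abstract state of s, i.e., L(t) = L(s)⟦o⟧. -/
/-- A SAS+ operator: partial states `pre` and `eff` given as partial functions
from variables to values. -/
structure SasOp (V D : Type) where
  pre : V → Option D
  eff : V → Option D

/-- The set of facts of a partial state. -/
def pfacts {V D : Type} (p : V → Option D) : Set (V × D) := {f | p f.1 = some f.2}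

/-- The set of facts of a total state. -/
def stFacts {V D : Type} (s : V → D) : Set (V × D) := {f | s f.1 = f.2}

/-- Applying an operator: effect variables get their `eff` value, others unchanged. -/
def applyOp {V D : Type} (o : SasOp V D) (s : V → D) : V → D :=
  fun v => (o.eff v).getD (s v)

/-- The prevail condition: the preconditions on variables outside the effect. -/
def prv {V D : Type} (o : SasOp V D) : V → Option D := fun v =>
  match o.eff v with
  | some _ => none
  | none => o.pre v

/-- The frame of an operator option at abstract state `x`:
`prv(o) ∪ (x \ (pre(o) ∪ eff(o)))` as fact sets. -/
def optFrame {V D : Type} (o : SasOp V D) (x : V → D) : Set (V × D) :=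
  pfacts (prv o) ∪ (stFacts x \ (pfacts o.pre ∪ pfacts o.eff))

section

variable {V D : Type} {o : SasOp V D} {v : V}

lemma mem_pfacts {p : V → Option D} {d : D} : (v, d) ∈ pfacts p ↔ p v = some d := Iff.rfl

lemma prv_of_eff_eq_none (heff : o.eff v = none) : prv o v = o.pre v := by
  simp [prv, heff]

lemma applyOp_of_eff_eq_none (heff : o.eff v = none) (x : V → D) : applyOp o x v = x v := by
  simp [applyOp, heff]

lemma applyOp_of_eff_eq_some {d : D} (heff : o.eff v = some d) (x : V → D) :
    applyOp o x v = d := by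
  simp [applyOp, heff]

lemma mem_optFrame_iff_of_pre_eff_eq_none (hpre : o.pre v = none) (heff : o.eff v = none)
    {x : V → D} {d : D} : (v, d) ∈ optFrame o x ↔ x v = d := by
  simp [optFrame, pfacts, stFacts, prv, hpre, heff]

/- Effect variables are fixed by the termination condition and prevail variables by the
precondition together with it; every other variable lies outside `pre(o) ∪ eff(o)`, so its
fact in `x` belongs to the frame at `x`, and the frame inclusion carries it over to `y`. -/
theorem eq_applyOp_of_optFrame_subset {x y : V → D} (hpre : pfacts o.pre ⊆ stFacts x)
    (hterm : pfacts (prv o) ∪ pfacts o.eff ⊆ stFacts y)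
    (hframe : optFrame o x ⊆ optFrame o y) : y = applyOp o x := by
  funext v
  cases heff : o.eff v with
  | some d =>
    rw [applyOp_of_eff_eq_some heff]
    exact hterm (Or.inr (mem_pfacts.2 heff))
  | none =>
    rw [applyOp_of_eff_eq_none heff]
    cases hpv : o.pre v with
    | some d =>
      have hprv : prv o v = some d := (prv_of_eff_eq_none heff).trans hpv
      exact (hterm (Or.inl (mem_pfacts.2 hprv))).trans (hpre (mem_pfacts.2 hpv)).symm
    | none =>
      have hx : (v, x v) ∈ optFrame o x := (mem_optFrame_iff_of_pre_eff_eq_none hpv heff).2 rfl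
      exact (mem_optFrame_iff_of_pre_eff_eq_none hpv heff).1 (hframe hx)

end

/-- If a PaRL task with plan options is frame preserving, then every SMDP
transition `⟨s, o, t⟩` satisfies `L(t) = L(s)⟦o⟧`. -/
theorem stmt0 {S V D : Type} (Ops : Set (SasOp V D)) (L : S → V → D)
    (Reach : S → SasOp V D → S → Prop)  -- positive probability of the option execution
    (Trans : S → SasOp V D → S → Prop)  -- SMDP labeled transitions
    (hTrans : ∀ s o t, Trans s o t ↔
      o ∈ Ops ∧ pfacts o.pre ⊆ stFacts (L s) ∧
      (pfacts (prv o) ∪ pfacts o.eff) ⊆ stFacts (L t) ∧ Reach s o t)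
    (hFP : ∀ s o t, Trans s o t → optFrame o (L s) = optFrame o (L t)) :
    ∀ s o t, Trans s o t → L t = applyOp o (L s) := by
  intro s o t hT
  obtain ⟨-, hpre, hterm, -⟩ := (hTrans s o t).mp hT
  exact eq_applyOp_of_optFrame_subset hpre hterm (hFP s o t hT).subset
end

section
/- If a PaRL task with plan options is frame preserving, then the relation R = {⟨s, t⟩ ∈ S × S | L(s) = L(t)} is a bisimulation between the SMDP transition graph and itself with respect to operator labels: whenever ⟨s, o, s'⟩ is an SMDP transition and L(t) = L(s), every SMDP transition ⟨t, o, t'⟩ satisfies L(t') = L(s'). -/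
lemma frame_keep {S V D : Type} {L : S → V → D} {o : SasOp V D} {s s' : S}
    (hFP : optFrame o (L s) = optFrame o (L s'))
    {v : V} (hpre : o.pre v = none) (heff : o.eff v = none) :
    L s' v = L s v := by
  have hmem : ((v, L s v) : V × D) ∈ optFrame o (L s) := by
    right
    refine ⟨rfl, ?_⟩
    rintro (h | h) <;> simp [pfacts, hpre, heff] at h
  rw [hFP] at hmem
  rcases hmem with h | ⟨h, _⟩
  · simp [pfacts, prv, heff, hpre] at h
  · exact h

/-- If a PaRL task with plan options is frame preserving, then the relation
`{⟨s,t⟩ | L(s) = L(t)}` is a bisimulation of the SMDP transition graph with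
itself w.r.t. operator labels: whenever `⟨s, o, s'⟩` is an SMDP transition and
`L(t) = L(s)`, every SMDP transition `⟨t, o, t'⟩` satisfies `L(t') = L(s')`. -/
theorem stmt1 {S V D : Type} (Ops : Set (SasOp V D)) (L : S → V → D)
    (Reach : S → SasOp V D → S → Prop)
    (Trans : S → SasOp V D → S → Prop)
    (hTrans : ∀ s o t, Trans s o t ↔
      o ∈ Ops ∧ pfacts o.pre ⊆ stFacts (L s) ∧
      (pfacts (prv o) ∪ pfacts o.eff) ⊆ stFacts (L t) ∧ Reach s o t)
    (hFP : ∀ s o t, Trans s o t → optFrame o (L s) = optFrame o (L t)) :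
    ∀ s s' t t' o, Trans s o s' → L t = L s → Trans t o t' → L t' = L s' := by
  intro s s' t t' o hss' hts htt'
  obtain ⟨_, _, hs'term, _⟩ := (hTrans s o s').mp hss'
  obtain ⟨_, _, ht'term, _⟩ := (hTrans t o t').mp htt'
  funext v
  cases heff : o.eff v with
  | some d =>
    have h1 : ((v, d) : V × D) ∈ stFacts (L s') := hs'term (Or.inr heff)
    have h2 : ((v, d) : V × D) ∈ stFacts (L t') := ht'term (Or.inr heff)
    rw [h1, h2]
  | none =>
    cases hpre : o.pre v with
    | some d =>
      have hp : prv o v = some d := by simp [prv, heff, hpre]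
      have h1 : ((v, d) : V × D) ∈ stFacts (L s') := hs'term (Or.inl hp)
      have h2 : ((v, d) : V × D) ∈ stFacts (L t') := ht'term (Or.inl hp)
      rw [h1, h2]
    | none =>
      have h1 := frame_keep (hFP s o s' hss') hpre heff
      have h2 := frame_keep (hFP t o t' htt') hpre heff
      rw [h1, h2, hts]
end

section
/- If a PaRL task ⟨M, Π, L⟩ is frame preserving, then for any SMDP transition ⟨s, o, t⟩ the termination state's abstract state is completely determined: L(t) = F_{O_o}(s) ∪ pre(o) restricted away from effect variables, united with eff(o); in particular L(t) does not depend on the choice of t within the termination set reachable from s. -/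
/-- In a frame-preserving PaRL task, the abstract state of the termination state
of an SMDP transition `⟨s, o, t⟩` is completely determined:
`L(t) = F_{O_o}(s) ∪ eff(o)` (where the frame already contains `prv(o)`, i.e.
`pre(o)` restricted away from effect variables); in particular `L(t)` does not
depend on the choice of `t`. -/
theorem stmt6 {S V D : Type} (Ops : Set (SasOp V D)) (L : S → V → D)
    (Reach : S → SasOp V D → S → Prop)
    (Trans : S → SasOp V D → S → Prop)
    (hTrans : ∀ s o t, Trans s o t ↔
      o ∈ Ops ∧ pfacts o.pre ⊆ stFacts (L s) ∧
      (pfacts (prv o) ∪ pfacts o.eff) ⊆ stFacts (L t) ∧ Reach s o t)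
    (hFP : ∀ s o t, Trans s o t → optFrame o (L s) = optFrame o (L t)) :
    ∀ s o t, Trans s o t →
      stFacts (L t) = optFrame o (L s) ∪ pfacts o.eff ∧
      ∀ t', Trans s o t' → L t = L t' := by
  intro s o t ht
  have key : ∀ u, Trans s o u → ∀ v,
      L u v = (o.eff v).getD ((o.pre v).getD (L s v)) := by
    intro u hu v
    obtain ⟨_, hpre, hpe, _⟩ := (hTrans s o u).mp hu
    have hfp := hFP s o u hu
    cases heff : o.eff v with
    | some e =>
      have : (v, e) ∈ pfacts o.eff := heff
      have := hpe (Or.inr this)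
      simpa [stFacts] using this
    | none =>
      cases hp : o.pre v with
      | some p =>
        have : (v, p) ∈ pfacts (prv o) := by simp [pfacts, prv, heff, hp]
        have := hpe (Or.inl this)
        simpa [stFacts] using this
      | none =>
        have hmem : (v, L s v) ∈ optFrame o (L s) := by
          refine Or.inr ⟨rfl, ?_⟩
          simp [pfacts, heff, hp]
        rw [hfp] at hmem
        rcases hmem with h | h
        · simp [pfacts, prv, heff, hp] at h
        · exact h.1
  have hfp := hFP s o t ht
  obtain ⟨_, hpreS, hpeT, _⟩ := (hTrans s o t).mp ht
  refine ⟨?_, fun t' ht' => funext fun v => (key t ht v).trans (key t' ht' v).symm⟩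
  apply Set.eq_of_subset_of_subset
  · rintro ⟨v, d⟩ h
    have hd : L t v = d := h
    have hk := key t ht v
    cases heff : o.eff v with
    | some e =>
      simp only [heff, Option.getD_some] at hk
      exact Or.inr (heff.trans (congrArg some (hk.symm.trans hd)))
    | none =>
      cases hp : o.pre v with
      | some p =>
        simp only [heff, hp, Option.getD_none, Option.getD_some] at hk
        have hprv : prv o v = some p := by simp [prv, heff, hp]
        exact Or.inl (Or.inl (hprv.trans (congrArg some (hk.symm.trans hd))))
      | none =>
        simp only [heff, hp, Option.getD_none] at hk
        refine Or.inl (Or.inr ⟨hk.symm.trans hd, ?_⟩)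
        rintro (h' | h')
        · exact absurd (show o.pre v = some d from h') (by simp [hp])
        · exact absurd (show o.eff v = some d from h') (by simp [heff])
  · rintro ⟨v, d⟩ (h | h)
    · rw [hfp] at h
      rcases h with h | h
      · exact hpeT (Or.inl h)
      · exact h.1
    · exact hpeT (Or.inr h)
end
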